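/- arXiv:2209.11583 — 3 statements merged into one kernel-verified Lean document; each statement's English description precedes it below -/
import Mathlib

section
/- If A is an element of SL(2, ℤ/3) with A ≠ 1, then the order of A is 2, 3, 4, or 6. -/
/-!
By Cayley–Hamilton every `A ∈ SL(2, R)` satisfies `A² = t A - 1` with `t = tr A`. Over `ℤ/3` the
trace takes one of the values `0`, `1`, `-1`, and accordingly `A² = -1`, `A³ = -1` or `A³ = 1`.
Since `-1 ≠ 1` in `SL(2, ℤ/3)`, the three cases give order `4`, order `2` or `6`, and (for `A ≠ 1`)
order `3`.
-/

open Matrix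
open scoped MatrixGroups

section OrderOfNeg

variable {G : Type*} [Monoid G] [HasDistribNeg G] {x : G}

theorem orderOf_eq_four_of_sq_eq_neg_one (h : x ^ 2 = -1) (hne : (-1 : G) ≠ 1) :
    orderOf x = 4 :=
  orderOf_eq_prime_pow (p := 2) (n := 1) (by rwa [pow_one, h])
    (by rw [pow_succ, pow_one, pow_mul, h, neg_one_sq])

theorem orderOf_eq_two_or_six_of_pow_three_eq_neg_one (h : x ^ 3 = -1) (hne : (-1 : G) ≠ 1) :
    orderOf x = 2 ∨ orderOf x = 6 := by
  have h6 : orderOf x ∣ 6 :=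
    orderOf_dvd_of_pow_eq_one (by rw [show 6 = 3 * 2 from rfl, pow_mul, h, neg_one_sq])
  have h3 : ¬ orderOf x ∣ 3 := by rwa [orderOf_dvd_iff_pow_eq_one, h]
  have := Nat.le_of_dvd (by norm_num) h6
  interval_cases orderOf x <;> omega

end OrderOfNeg

namespace Matrix.SpecialLinearGroup

variable {R : Type*} [CommRing R]

theorem coe_sq_eq_trace_smul_sub_one (A : SL(2, R)) :
    (A : Matrix (Fin 2) (Fin 2) R) ^ 2 =
      trace (A : Matrix (Fin 2) (Fin 2) R) • (A : Matrix (Fin 2) (Fin 2) R) - 1 := by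
  have hdet := A.det_coe
  rw [det_fin_two] at hdet
  ext i j
  fin_cases i <;> fin_cases j <;> simp [sq, trace_fin_two, mul_apply, Fin.sum_univ_two] <;>
    first | ring1 | linear_combination -hdet

theorem coe_pow_three (A : SL(2, R)) :
    (A : Matrix (Fin 2) (Fin 2) R) ^ 3 =
      (trace (A : Matrix (Fin 2) (Fin 2) R) ^ 2 - 1) • (A : Matrix (Fin 2) (Fin 2) R)
        - trace (A : Matrix (Fin 2) (Fin 2) R) • 1 := by
  rw [pow_succ, coe_sq_eq_trace_smul_sub_one, sub_mul, smul_mul_assoc, ← sq,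
    coe_sq_eq_trace_smul_sub_one, one_mul, smul_sub, smul_smul, sub_smul, one_smul, ← sq]
  abel

theorem sq_eq_neg_one_of_trace_eq_zero {A : SL(2, R)}
    (h : trace (A : Matrix (Fin 2) (Fin 2) R) = 0) : A ^ 2 = -1 := by
  ext1
  rw [coe_pow, coe_sq_eq_trace_smul_sub_one, h, zero_smul, zero_sub, coe_neg, coe_one]

theorem pow_three_eq_neg_one_of_trace_eq_one {A : SL(2, R)}
    (h : trace (A : Matrix (Fin 2) (Fin 2) R) = 1) : A ^ 3 = -1 := by
  ext1
  rw [coe_pow, coe_pow_three, h]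
  simp

theorem pow_three_eq_one_of_trace_eq_neg_one {A : SL(2, R)}
    (h : trace (A : Matrix (Fin 2) (Fin 2) R) = -1) : A ^ 3 = 1 := by
  ext1
  rw [coe_pow, coe_pow_three, h]
  simp

theorem neg_one_ne_one (h : (2 : R) ≠ 0) : (-1 : SL(2, R)) ≠ 1 := by
  intro h1
  have h00 := congrArg (fun A : SL(2, R) => (A : Matrix (Fin 2) (Fin 2) R) 0 0) h1
  simp only [coe_neg, coe_one, neg_apply, one_apply_eq] at h00
  exact h (by linear_combination -h00)

end Matrix.SpecialLinearGroup

open Matrix.SpecialLinearGroup in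
theorem stmt_11 (A : Matrix.SpecialLinearGroup (Fin 2) (ZMod 3)) (h : A ≠ 1) :
    orderOf A = 2 ∨ orderOf A = 3 ∨ orderOf A = 4 ∨ orderOf A = 6 := by
  have hne : (-1 : SL(2, ZMod 3)) ≠ 1 := neg_one_ne_one (by decide)
  have htrace : ∀ t : ZMod 3, t = 0 ∨ t = 1 ∨ t = -1 := by decide
  rcases htrace (trace (A : Matrix (Fin 2) (Fin 2) (ZMod 3))) with h0 | h1 | h2
  · exact Or.inr <| Or.inr <| Or.inl <|
      orderOf_eq_four_of_sq_eq_neg_one (sq_eq_neg_one_of_trace_eq_zero h0) hne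
  · rcases orderOf_eq_two_or_six_of_pow_three_eq_neg_one
      (pow_three_eq_neg_one_of_trace_eq_one h1) hne with h2 | h6
    · exact Or.inl h2
    · exact Or.inr <| Or.inr <| Or.inr h6
  · exact Or.inr <| Or.inl <| orderOf_eq_prime (pow_three_eq_one_of_trace_eq_neg_one h2) h
end

section
/- Let m be a natural number divisible by 4. Then no element A of SL(2, ℤ/3) satisfies A^m = -1. -/
/-! Every element of `SL(2, ℤ/3)` has order dividing `12`. If `A ^ m = -1` with `4 ∣ m`, then
`12 ∣ 3 * m` gives `(-1) ^ 3 = A ^ (3 * m) = 1`, whereas `(-1) ^ 3 = -1 ≠ 1`. -/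

open Matrix

lemma pow_ne_of_pow_mul_three_eq_one {M : Type*} [Monoid M] {a z : M} {m : ℕ}
    (ha : a ^ (m * 3) = 1) (hz : z ^ 3 ≠ 1) : a ^ m ≠ z := by
  rintro rfl
  exact hz (by rwa [← pow_mul])

namespace Matrix.SpecialLinearGroup

lemma exponent_fin_two_zmod_three_dvd :
    Monoid.exponent (SpecialLinearGroup (Fin 2) (ZMod 3)) ∣ 12 :=
  Monoid.exponent_dvd_iff_forall_pow_eq_one.mpr (by decide)

lemma neg_one_pow_three_ne_one_fin_two_zmod_three :
    (-1 : SpecialLinearGroup (Fin 2) (ZMod 3)) ^ 3 ≠ 1 := by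
  decide

end Matrix.SpecialLinearGroup

theorem stmt_13 (m : ℕ) (h4 : 4 ∣ m)
    (A : Matrix.SpecialLinearGroup (Fin 2) (ZMod 3)) :
    A ^ m ≠ -1 := by
  have h12 : 12 ∣ m * 3 := mul_dvd_mul_right h4 3
  have hA : A ^ (m * 3) = 1 :=
    Monoid.exponent_dvd_iff_forall_pow_eq_one.mp
      (SpecialLinearGroup.exponent_fin_two_zmod_three_dvd.trans h12) A
  exact pow_ne_of_pow_mul_three_eq_one hA
    SpecialLinearGroup.neg_one_pow_three_ne_one_fin_two_zmod_three
end

section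
/- Let m be an even natural number that is not divisible by 4 (equivalently, m/2 is odd). Then for every element A of SL(2, ℤ/3), A^m = -1 if and only if A² = -1. -/
/-!
Every element of SL(2, ℤ/3) satisfies `A ^ 4 = 1` or `A ^ 6 = 1`. In the first case `A ^ m = A ^ 2`
because `m ≡ 2 [MOD 4]`. In the second case every even power of `A` has order dividing 3, so neither
`A ^ m` nor `A ^ 2` can be the involution `-1`.
-/

lemma pow_ne_of_even_of_pow_six_eq_one {M : Type*} [Monoid M] {a z : M} (ha : a ^ 6 = 1)
    (hz : z ^ 2 = 1) (hz1 : z ≠ 1) {m : ℕ} (hm : Even m) : a ^ m ≠ z := by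
  obtain ⟨k, rfl⟩ := hm
  rintro rfl
  apply hz1
  calc a ^ (k + k) = (a ^ (k + k)) ^ 3 := by rw [pow_succ, hz, one_mul]
    _ = (a ^ 6) ^ k := by rw [← pow_mul, ← pow_mul, show (k + k) * 3 = 6 * k by ring]
    _ = 1 := by rw [ha, one_pow]

namespace Matrix.SpecialLinearGroup

lemma pow_four_eq_one_or_pow_six_eq_one (A : SpecialLinearGroup (Fin 2) (ZMod 3)) :
    A ^ 4 = 1 ∨ A ^ 6 = 1 := by
  revert A
  decide

lemma neg_one_sq_eq_one_zmod_three : (-1 : SpecialLinearGroup (Fin 2) (ZMod 3)) ^ 2 = 1 := by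
  decide

lemma neg_one_ne_one_zmod_three : (-1 : SpecialLinearGroup (Fin 2) (ZMod 3)) ≠ 1 := by
  decide

end Matrix.SpecialLinearGroup

theorem stmt_14 (m : ℕ) (heven : Even m) (h4 : ¬ (4 ∣ m))
    (A : Matrix.SpecialLinearGroup (Fin 2) (ZMod 3)) :
    A ^ m = -1 ↔ A ^ 2 = -1 := by
  rcases A.pow_four_eq_one_or_pow_six_eq_one with hA | hA
  · obtain ⟨k, rfl⟩ := heven
    rw [pow_eq_pow_mod _ hA, show (k + k) % 4 = 2 by omega]
  · have hne {n : ℕ} (hn : Even n) : A ^ n ≠ -1 :=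
      pow_ne_of_even_of_pow_six_eq_one hA Matrix.SpecialLinearGroup.neg_one_sq_eq_one_zmod_three
        Matrix.SpecialLinearGroup.neg_one_ne_one_zmod_three hn
    exact iff_of_false (hne heven) (hne even_two)
end
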